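/- arXiv:2011.05886 — 2 statements merged into one kernel-verified Lean document; each statement's English description precedes it below -/
import Mathlib

section
/- The operators T_i on the exterior algebra (defined case-wise on basis elements φ_E by the set-theoretic action of the adjacent transposition s_i) satisfy the braid relations: T_i T_{i+1} T_i = T_{i+1} T_i T_{i+1} for 1 ≤ i < N-1, and T_i T_j = T_j T_i for |i - j| ≥ 2. -/
open Finset

noncomputable section

/-- The space of "fermionic" polynomials: formal linear combinations of
monomials `φ_E = θ_{i₁}⋯θ_{i_m}` indexed by finite sets `E` of indices. -/
abbrev SP (K : Type) [Field K] := Finset ℕ →₀ K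

variable {K : Type} [Field K]

/-- basis monomial φ_E -/
def phi (K : Type) [Field K] (E : Finset ℕ) : SP K := Finsupp.single E 1

/-- linear operator determined by its values on the basis {φ_E} -/
def opOf (v : Finset ℕ → SP K) : SP K →ₗ[K] SP K :=
  Finsupp.lsum K fun E => LinearMap.toSpanSingleton K (SP K) (v E)

/-- the image s_i E of E under the transposition swapping i, i+1 -/
def swapSet (i : ℕ) (E : Finset ℕ) : Finset ℕ := E.image (Equiv.swap i (i + 1))

/-- the Hecke algebra operator T_i acting on anti-commuting variables -/
def heckeT (t : K) (i : ℕ) : SP K →ₗ[K] SP K :=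
  opOf fun E =>
    if i ∈ E then
      (if i + 1 ∈ E then -phi K E else phi K (swapSet i E))
    else
      (if i + 1 ∈ E then (t - 1) • phi K E + t • phi K (swapSet i E)
       else t • phi K E)

lemma opOf_phi (v : Finset ℕ → SP K) (E : Finset ℕ) : opOf v (phi K E) = v E := by
  simp [opOf, phi]

lemma heckeT_phi (t : K) (i : ℕ) (E : Finset ℕ) :
    heckeT t i (phi K E) =
      if i ∈ E then
        (if i + 1 ∈ E then -phi K E else phi K (swapSet i E))
      else
        (if i + 1 ∈ E then (t - 1) • phi K E + t • phi K (swapSet i E)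
         else t • phi K E) := opOf_phi _ _

lemma mem_swapSet {k i : ℕ} {E : Finset ℕ} : k ∈ swapSet i E ↔ Equiv.swap i (i+1) k ∈ E := by
  constructor
  · rintro h
    rcases Finset.mem_image.1 h with ⟨a, ha, rfl⟩
    simpa using ha
  · intro h; exact Finset.mem_image.2 ⟨_, h, by simp⟩

lemma swapSet_swapSet (i : ℕ) (E : Finset ℕ) : swapSet i (swapSet i E) = E := by
  simp [swapSet, Finset.image_image, Function.comp_def, Equiv.swap_apply_self]

lemma mem_swapSet_of_ne {k i : ℕ} {E : Finset ℕ} (h1 : k ≠ i) (h2 : k ≠ i+1) :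
    k ∈ swapSet i E ↔ k ∈ E := by
  rw [mem_swapSet, Equiv.swap_apply_of_ne_of_ne h1 h2]

lemma ms1 (i : ℕ) (E : Finset ℕ) : i ∈ swapSet i E ↔ i+1 ∈ E := by
  rw [mem_swapSet, Equiv.swap_apply_left]

lemma ms2 (i : ℕ) (E : Finset ℕ) : i+1 ∈ swapSet i E ↔ i ∈ E := by
  rw [mem_swapSet, Equiv.swap_apply_right]

lemma ms3 (i : ℕ) (E : Finset ℕ) : i+2 ∈ swapSet i E ↔ i+2 ∈ E :=
  mem_swapSet_of_ne (by omega) (by omega)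

lemma ms4 (i : ℕ) (E : Finset ℕ) : i ∈ swapSet (i+1) E ↔ i ∈ E :=
  mem_swapSet_of_ne (by omega) (by omega)

lemma ms5 (i : ℕ) (E : Finset ℕ) : i+1 ∈ swapSet (i+1) E ↔ i+2 ∈ E := by
  rw [mem_swapSet]; norm_num

lemma ms6 (i : ℕ) (E : Finset ℕ) : i+2 ∈ swapSet (i+1) E ↔ i+1 ∈ E := by
  rw [mem_swapSet]
  rw [show (i+2 : ℕ) = (i+1)+1 from rfl, Equiv.swap_apply_right]

lemma swapSet_braid (i : ℕ) (E : Finset ℕ) :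
    swapSet (i+1) (swapSet i (swapSet (i+1) E)) = swapSet i (swapSet (i+1) (swapSet i E)) := by
  simp only [swapSet, Finset.image_image]
  congr 1
  funext x
  simp only [Function.comp_apply, Equiv.swap_apply_def]
  split_ifs <;> omega

lemma swapSet_comm {i j : ℕ} (h : i + 2 ≤ j) (E : Finset ℕ) :
    swapSet j (swapSet i E) = swapSet i (swapSet j E) := by
  simp only [swapSet, Finset.image_image]
  congr 1
  funext x
  simp only [Function.comp_apply, Equiv.swap_apply_def]
  split_ifs <;> omega

lemma swapSet_eq_of_mem {i : ℕ} {E : Finset ℕ} (h1 : i ∈ E) (h2 : i+1 ∈ E) :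
    swapSet i E = E := by
  ext k
  rw [mem_swapSet, Equiv.swap_apply_def]
  split_ifs with ha hb
  · subst ha; tauto
  · subst hb; tauto
  · rfl

lemma swapSet_eq_of_not_mem {i : ℕ} {E : Finset ℕ} (h1 : i ∉ E) (h2 : i+1 ∉ E) :
    swapSet i E = E := by
  ext k
  rw [mem_swapSet, Equiv.swap_apply_def]
  split_ifs with ha hb
  · subst ha; tauto
  · subst hb; tauto
  · rfl

lemma heckeT_braid_phi (t : K) (i : ℕ) (E : Finset ℕ) :
    heckeT t i (heckeT t (i+1) (heckeT t i (phi K E))) =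
      heckeT t (i+1) (heckeT t i (heckeT t (i+1) (phi K E))) := by
  by_cases h0 : i ∈ E <;> by_cases h1 : i+1 ∈ E <;> by_cases h2 : i+2 ∈ E <;>
    simp [h0, h1, h2, heckeT_phi, map_add, map_smul, map_neg, smul_add, smul_smul,
      show i+1+1 = i+2 from rfl, ms1, ms2, ms3, ms4, ms5, ms6,
      swapSet_swapSet, swapSet_braid, swapSet_eq_of_mem, swapSet_eq_of_not_mem] <;>
    module

lemma heckeT_comm_phi (t : K) (i j : ℕ) (h : i + 2 ≤ j) (E : Finset ℕ) :
    heckeT t i (heckeT t j (phi K E)) = heckeT t j (heckeT t i (phi K E)) := by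
  have c1 : i ∈ swapSet j E ↔ i ∈ E := mem_swapSet_of_ne (by omega) (by omega)
  have c2 : ∀ F, i+1 ∈ swapSet j F ↔ i+1 ∈ F := fun F => mem_swapSet_of_ne (by omega) (by omega)
  have c3 : ∀ F, j ∈ swapSet i F ↔ j ∈ F := fun F => mem_swapSet_of_ne (by omega) (by omega)
  have c4 : ∀ F, j+1 ∈ swapSet i F ↔ j+1 ∈ F := fun F => mem_swapSet_of_ne (by omega) (by omega)
  by_cases h0 : i ∈ E <;> by_cases h1 : i+1 ∈ E <;> by_cases h2 : j ∈ E <;> by_cases h3 : j+1 ∈ E <;>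
    simp [h0, h1, h2, h3, heckeT_phi, map_add, map_smul, map_neg, smul_add, smul_smul,
      c1, c2, c3, c4, swapSet_comm h] <;>
    module

/-- the operators `T_i` satisfy the braid relations
`T_i T_{i+1} T_i = T_{i+1} T_i T_{i+1}` for `1 ≤ i < N-1`, and
`T_i T_j = T_j T_i` for `|i - j| ≥ 2`. -/
theorem heckeT_braid (K : Type) [Field K] (t : K) (N : ℕ) :
    (∀ i, 1 ≤ i → i < N - 1 →
      heckeT t i ∘ₗ heckeT t (i + 1) ∘ₗ heckeT t i =
        (heckeT t (i + 1) ∘ₗ heckeT t i ∘ₗ heckeT t (i + 1) : SP K →ₗ[K] SP K)) ∧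
    (∀ i j, 1 ≤ i → i < N → 1 ≤ j → j < N → i + 2 ≤ j →
      heckeT t i ∘ₗ heckeT t j = (heckeT t j ∘ₗ heckeT t i : SP K →ₗ[K] SP K)) := by
  constructor
  · intro i _ _
    apply Finsupp.lhom_ext
    intro E b
    have hb : (Finsupp.single E b : SP K) = b • phi K E := by simp [phi, Finsupp.smul_single]
    simp only [LinearMap.comp_apply, hb, map_smul]
    exact congrArg (b • ·) (heckeT_braid_phi t i E)
  · intro i j _ _ _ _ hij
    apply Finsupp.lhom_ext
    intro E b
    have hb : (Finsupp.single E b : SP K) = b • phi K E := by simp [phi, Finsupp.smul_single]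
    simp only [LinearMap.comp_apply, hb, map_smul]
    exact congrArg (b • ·) (heckeT_comm_phi t i j hij E)
end
end

section
/- Let P_m denote the span of {φ_E : #E = m}. Then P_m is the direct sum of P_{m,0} = P_m ∩ ker D and P_{m,1} = P_m ∩ ker M; moreover M restricts to a linear isomorphism P_{m,0} → P_{m+1,1} and D restricts to a linear isomorphism P_{m+1,1} → P_{m,0}. -/
open Finset

noncomputable section

variable {K : Type} [Field K]

/-- signed exterior multiplication θ̂_i -/
def thetaHat (K : Type) [Field K] (i : ℕ) : SP K →ₗ[K] SP K :=
  opOf fun E =>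
    if i ∈ E then 0
    else ((-1 : K) ^ (E.filter (· < i)).card) • phi K (insert i E)

/-- formal fermionic derivative ∂_i -/
def fermD (K : Type) [Field K] (i : ℕ) : SP K →ₗ[K] SP K :=
  opOf fun E =>
    if i ∈ E then ((-1 : K) ^ (E.filter (· < i)).card) • phi K (E.erase i)
    else 0

/-- M = Σ_{i=1}^N θ̂_i -/
def opM (K : Type) [Field K] (N : ℕ) : SP K →ₗ[K] SP K :=
  ∑ i ∈ Finset.Icc 1 N, thetaHat K i

/-- D = Σ_{i=1}^N t^{i-1} ∂_i -/
def opD (t : K) (N : ℕ) : SP K →ₗ[K] SP K :=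
  ∑ i ∈ Finset.Icc 1 N, t ^ (i - 1) • fermD K i

/-- P_m = span{φ_E : E ⊆ {1,…,N}, #E = m} -/
def Pm (K : Type) [Field K] (N m : ℕ) : Submodule K (SP K) :=
  Submodule.span K (phi K '' {E | E ⊆ Finset.Icc 1 N ∧ E.card = m})

/-- sign -/
def sg (K : Type) [Field K] (i : ℕ) (E : Finset ℕ) : K := (-1 : K) ^ (E.filter (· < i)).card

lemma opOf_ext {f g : SP K →ₗ[K] SP K} (h : ∀ E, f (phi K E) = g (phi K E)) : f = g := by
  refine Finsupp.lhom_ext' fun E => ?_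
  refine LinearMap.ext_ring ?_
  simpa [phi] using h E

/-- sign -/

lemma sg_insert {i j : ℕ} {E : Finset ℕ} (hj : j ∉ E) :
    sg K i (insert j E) = (if j < i then -1 else 1) * sg K i E := by
  unfold sg
  rw [Finset.filter_insert]
  by_cases h : j < i
  · rw [if_pos h, if_pos h, Finset.card_insert_of_notMem (by simp [hj]), pow_succ]; ring
  · rw [if_neg h, if_neg h, one_mul]

lemma sg_sq (i : ℕ) (E : Finset ℕ) : sg K i E * sg K i E = 1 := by
  unfold sg; rw [← pow_add, ← two_mul, pow_mul]; norm_num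

lemma sg_erase {i j : ℕ} {E : Finset ℕ} (hj : j ∈ E) :
    sg K i (E.erase j) = (if j < i then -1 else 1) * sg K i E := by
  have h1 : sg K i E = (if j < i then -1 else 1) * sg K i (E.erase j) := by
    conv_lhs => rw [← Finset.insert_erase hj]
    exact sg_insert (Finset.notMem_erase j E)
  rw [h1, ← mul_assoc]
  split <;> ring

lemma thetaHat_phi (i : ℕ) (E : Finset ℕ) :
    thetaHat K i (phi K E) = if i ∈ E then 0 else sg K i E • phi K (insert i E) := by
  rw [thetaHat, opOf_phi]; rfl

lemma fermD_phi (i : ℕ) (E : Finset ℕ) :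
    fermD K i (phi K E) = if i ∈ E then sg K i E • phi K (E.erase i) else 0 := by
  rw [fermD, opOf_phi]; rfl

lemma thetaHat_anticomm (i j : ℕ) :
    thetaHat K i ∘ₗ thetaHat K j + thetaHat K j ∘ₗ thetaHat K i = 0 := by
  apply opOf_ext; intro E
  simp only [LinearMap.add_apply, LinearMap.comp_apply, LinearMap.zero_apply]
  rcases eq_or_ne i j with rfl | hij
  · by_cases hi : i ∈ E <;>
      simp [thetaHat_phi, hi, Finset.mem_insert]
  · by_cases hi : i ∈ E <;> by_cases hj : j ∈ E <;>
      simp [thetaHat_phi, hi, hj, Finset.mem_insert, hij, hij.symm, smul_smul]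
    rw [Finset.insert_comm, sg_insert hj, sg_insert hi]
    rcases hij.lt_or_gt with h | h
    · rw [if_pos h, if_neg (not_lt.2 h.le)]; module
    · rw [if_neg (not_lt.2 h.le), if_pos h]; module

lemma fermD_anticomm (i j : ℕ) :
    fermD K i ∘ₗ fermD K j + fermD K j ∘ₗ fermD K i = 0 := by
  apply opOf_ext; intro E
  simp only [LinearMap.add_apply, LinearMap.comp_apply, LinearMap.zero_apply]
  rcases eq_or_ne i j with rfl | hij
  · by_cases hi : i ∈ E <;>
      simp [fermD_phi, hi, Finset.mem_erase]
  · by_cases hi : i ∈ E <;> by_cases hj : j ∈ E <;>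
      simp [fermD_phi, hi, hj, Finset.mem_erase, hij, hij.symm, smul_smul]
    rw [Finset.erase_right_comm, sg_erase hj, sg_erase hi]
    rcases hij.lt_or_gt with h | h
    · rw [if_pos h, if_neg (not_lt.2 h.le)]; module
    · rw [if_neg (not_lt.2 h.le), if_pos h]; module

lemma fermD_thetaHat_ne (i j : ℕ) (hij : i ≠ j) :
    fermD K i ∘ₗ thetaHat K j + thetaHat K j ∘ₗ fermD K i = 0 := by
  apply opOf_ext; intro E
  simp only [LinearMap.add_apply, LinearMap.comp_apply, LinearMap.zero_apply]
  by_cases hi : i ∈ E <;> by_cases hj : j ∈ E <;>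
    simp [fermD_phi, thetaHat_phi, hi, hj, Finset.mem_erase, Finset.mem_insert,
      hij, hij.symm, smul_smul]
  · -- i ∈ E, j ∉ E
    rw [Finset.erase_insert_of_ne hij.symm, sg_insert hj, sg_erase hi]
    rcases hij.lt_or_gt with h | h
    · rw [if_neg (not_lt.2 h.le), if_pos h]; module
    · rw [if_pos h, if_neg (not_lt.2 h.le)]; module

lemma fermD_thetaHat_self (i : ℕ) :
    fermD K i ∘ₗ thetaHat K i + thetaHat K i ∘ₗ fermD K i = LinearMap.id := by
  apply opOf_ext; intro E
  simp only [LinearMap.add_apply, LinearMap.comp_apply, LinearMap.id_apply]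
  by_cases hi : i ∈ E <;>
    simp [fermD_phi, thetaHat_phi, hi, Finset.mem_erase, Finset.mem_insert, smul_smul,
      Finset.erase_insert, Finset.insert_erase]
  · rw [sg_erase hi, if_neg (lt_irrefl i), one_mul, sg_sq, one_smul]
  · rw [sg_insert hi, if_neg (lt_irrefl i), one_mul, sg_sq, one_smul]

lemma thetaHat_comp_self (i : ℕ) : thetaHat K i ∘ₗ thetaHat K i = 0 := by
  apply opOf_ext; intro E
  by_cases hi : i ∈ E <;>
    simp [thetaHat_phi, hi, Finset.mem_insert]

lemma fermD_comp_self (i : ℕ) : fermD K i ∘ₗ fermD K i = 0 := by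
  apply opOf_ext; intro E
  by_cases hi : i ∈ E <;>
    simp [fermD_phi, hi, Finset.mem_erase]

lemma opM_opM (N : ℕ) (f : SP K) : opM K N (opM K N f) = 0 := by
  simp only [opM, LinearMap.sum_apply, map_sum]
  rw [← Finset.sum_product']
  refine Finset.sum_involution (fun a _ => a.swap) (fun a _ => ?_) (fun a _ ha => ?_)
    (fun a ha => by simpa [Finset.mem_product, and_comm] using ha) (fun a _ => rfl)
  · have := congrFun (congrArg DFunLike.coe (thetaHat_anticomm (K := K) a.2 a.1)) f
    simpa using this
  · intro hsw
    have h12 : a.2 = a.1 := congrArg Prod.fst hsw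
    rw [h12] at ha
    exact ha (by simpa using congrFun (congrArg DFunLike.coe
      (thetaHat_comp_self (K := K) a.1)) f)

lemma opD_opD (t : K) (N : ℕ) (f : SP K) : opD t N (opD t N f) = 0 := by
  simp only [opD, LinearMap.sum_apply, LinearMap.smul_apply, map_sum, map_smul,
    Finset.smul_sum]
  rw [← Finset.sum_product']
  refine Finset.sum_involution (fun a _ => a.swap) (fun a _ => ?_) (fun a _ ha => ?_)
    (fun a ha => by simpa [Finset.mem_product, and_comm] using ha) (fun a _ => rfl)
  · have h := congrFun (congrArg DFunLike.coe (fermD_anticomm (K := K) a.2 a.1)) f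
    simp only [LinearMap.add_apply, LinearMap.comp_apply, LinearMap.zero_apply] at h
    simp only [Prod.fst_swap, Prod.snd_swap, smul_smul]
    rw [mul_comm (t ^ (a.2 - 1)) (t ^ (a.1 - 1)), ← smul_add, h, smul_zero]
  · intro hsw
    have h12 : a.2 = a.1 := congrArg Prod.fst hsw
    rw [h12] at ha
    refine ha ?_
    have h := congrFun (congrArg DFunLike.coe (fermD_comp_self (K := K) a.1)) f
    simp only [LinearMap.comp_apply, LinearMap.zero_apply] at h
    simp [h]

lemma sum_pow_reindex (t : K) (N : ℕ) :
    ∑ j ∈ Finset.Icc 1 N, t ^ (j - 1) = ∑ i ∈ Finset.range N, t ^ i := by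
  rw [← Finset.Ico_add_one_right_eq_Icc, Finset.sum_Ico_eq_sum_range]
  simp

lemma opDM (t : K) (N : ℕ) (f : SP K) :
    opD t N (opM K N f) + opM K N (opD t N f) = (∑ i ∈ Finset.range N, t ^ i) • f := by
  have key : ∀ j i : ℕ, t ^ (j - 1) • fermD K j (thetaHat K i f)
      + t ^ (j - 1) • thetaHat K i (fermD K j f)
      = if j = i then t ^ (j - 1) • f else 0 := by
    intro j i
    rw [← smul_add]
    rcases eq_or_ne j i with rfl | hij
    · have h := congrFun (congrArg DFunLike.coe (fermD_thetaHat_self (K := K) j)) f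
      simp only [LinearMap.add_apply, LinearMap.comp_apply, LinearMap.id_apply] at h
      rw [if_pos rfl, h]
    · have h := congrFun (congrArg DFunLike.coe (fermD_thetaHat_ne (K := K) j i hij)) f
      simp only [LinearMap.add_apply, LinearMap.comp_apply, LinearMap.zero_apply] at h
      rw [if_neg hij, h, smul_zero]
  simp only [opD, opM, LinearMap.sum_apply, LinearMap.smul_apply, map_sum, map_smul,
    Finset.smul_sum]
  rw [Finset.sum_comm (f := fun x x1 => t ^ (x1 - 1) • fermD K x1 (thetaHat K x f))]
  rw [← Finset.sum_add_distrib]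
  have step : ∀ j ∈ Finset.Icc 1 N,
      ((∑ i ∈ Finset.Icc 1 N, t ^ (j - 1) • fermD K j (thetaHat K i f))
        + ∑ i ∈ Finset.Icc 1 N, t ^ (j - 1) • thetaHat K i (fermD K j f))
      = t ^ (j - 1) • f := by
    intro j hj
    rw [← Finset.sum_add_distrib, Finset.sum_congr rfl fun i _ => key j i,
      Finset.sum_ite_eq, if_pos hj]
  rw [Finset.sum_congr rfl step, ← Finset.sum_smul, sum_pow_reindex]

lemma opM_maps (N m : ℕ) (f : SP K) (hf : f ∈ Pm K N m) :
    opM K N f ∈ Pm K N (m + 1) := by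
  have : Submodule.map (opM K N) (Pm K N m) ≤ Pm K N (m + 1) := by
    rw [Pm, Submodule.map_span, Submodule.span_le]
    rintro x ⟨y, ⟨E, ⟨hE, hcard⟩, rfl⟩, rfl⟩
    show opM K N (phi K E) ∈ Pm K N (m + 1)
    rw [opM, LinearMap.sum_apply]
    refine Submodule.sum_mem _ fun i hi => ?_
    rw [thetaHat_phi]
    split
    · exact Submodule.zero_mem _
    · refine Submodule.smul_mem _ _ (Submodule.subset_span ⟨insert i E, ⟨?_, ?_⟩, rfl⟩)
      · exact Finset.insert_subset hi hE
      · rw [Finset.card_insert_of_notMem ‹i ∉ E›, hcard]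
  exact this ⟨f, hf, rfl⟩

lemma opD_maps (t : K) (N m : ℕ) (f : SP K) (hf : f ∈ Pm K N (m + 1)) :
    opD t N f ∈ Pm K N m := by
  have : Submodule.map (opD t N) (Pm K N (m + 1)) ≤ Pm K N m := by
    rw [Pm, Submodule.map_span, Submodule.span_le]
    rintro x ⟨y, ⟨E, ⟨hE, hcard⟩, rfl⟩, rfl⟩
    show opD t N (phi K E) ∈ Pm K N m
    rw [opD, LinearMap.sum_apply]
    refine Submodule.sum_mem _ fun i hi => ?_
    rw [LinearMap.smul_apply, fermD_phi]
    split
    · refine Submodule.smul_mem _ _ (Submodule.smul_mem _ _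
        (Submodule.subset_span ⟨E.erase i, ⟨?_, ?_⟩, rfl⟩))
      · exact (Finset.erase_subset i E).trans hE
      · rw [Finset.card_erase_of_mem ‹i ∈ E›, hcard]; omega
    · simp only [smul_zero]
      exact Submodule.zero_mem _
  exact this ⟨f, hf, rfl⟩

lemma opD_zero_on_P0 (t : K) (N : ℕ) (f : SP K) (hf : f ∈ Pm K N 0) :
    opD t N f = 0 := by
  induction hf using Submodule.span_induction with
  | mem x hx =>
    obtain ⟨E, ⟨-, hcard⟩, rfl⟩ := hx
    rw [Finset.card_eq_zero] at hcard
    subst hcard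
    rw [opD, LinearMap.sum_apply]
    refine Finset.sum_eq_zero fun i _ => ?_
    rw [LinearMap.smul_apply, fermD_phi]
    simp
  | zero => exact map_zero _
  | add x y _ _ hx hy => rw [map_add, hx, hy, add_zero]
  | smul a x _ hx => rw [map_smul, hx, smul_zero]

/-- P_m = P_{m,0} ⊕ P_{m,1} where P_{m,0} = P_m ∩ ker D and
P_{m,1} = P_m ∩ ker M; moreover M : P_{m,0} → P_{m+1,1} and
D : P_{m+1,1} → P_{m,0} are linear isomorphisms. -/
theorem Pm_directSum_isos (K : Type) [Field K] (t : K) (ht : t ≠ 0) (N m : ℕ)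
    (hgen : (∑ i ∈ Finset.range N, t ^ i) ≠ 0) :
    (Pm K N m =
      (Pm K N m ⊓ LinearMap.ker (opD t N)) ⊔ (Pm K N m ⊓ LinearMap.ker (opM K N))) ∧
    ((Pm K N m ⊓ LinearMap.ker (opD t N)) ⊓ (Pm K N m ⊓ LinearMap.ker (opM K N)) = ⊥) ∧
    (Submodule.map (opM K N) (Pm K N m ⊓ LinearMap.ker (opD t N)) =
      Pm K N (m + 1) ⊓ LinearMap.ker (opM K N)) ∧
    (∀ f ∈ Pm K N m ⊓ LinearMap.ker (opD t N), opM K N f = 0 → f = 0) ∧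
    (Submodule.map (opD t N) (Pm K N (m + 1) ⊓ LinearMap.ker (opM K N)) =
      Pm K N m ⊓ LinearMap.ker (opD t N)) ∧
    (∀ f ∈ Pm K N (m + 1) ⊓ LinearMap.ker (opM K N), opD t N f = 0 → f = 0) := by
  set c : K := ∑ i ∈ Finset.range N, t ^ i with hc
  -- if D f = 0 and M f = 0 then f = 0
  have hzero : ∀ f : SP K, opD t N f = 0 → opM K N f = 0 → f = 0 := by
    intro f hD hM
    have h := opDM t N f
    rw [hM, hD, map_zero, map_zero, add_zero] at h
    have := h.symm
    rwa [smul_eq_zero, or_iff_right hgen] at this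
  refine ⟨?_, ?_, ?_, ?_, ?_, ?_⟩
  · refine le_antisymm ?_ (sup_le inf_le_left inf_le_left)
    intro f hf
    have hdecomp : f = c⁻¹ • opD t N (opM K N f) + c⁻¹ • opM K N (opD t N f) := by
      rw [← smul_add, opDM t N f, smul_smul, inv_mul_cancel₀ hgen, one_smul]
    have h1 : c⁻¹ • opD t N (opM K N f) ∈ Pm K N m ⊓ LinearMap.ker (opD t N) := by
      refine Submodule.mem_inf.2 ⟨Submodule.smul_mem _ _
        (opD_maps t N m _ (opM_maps N m f hf)), ?_⟩
      rw [LinearMap.mem_ker, map_smul, opD_opD, smul_zero]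
    have h2 : c⁻¹ • opM K N (opD t N f) ∈ Pm K N m ⊓ LinearMap.ker (opM K N) := by
      refine Submodule.mem_inf.2 ⟨Submodule.smul_mem _ _ ?_, ?_⟩
      · match m, hf with
        | 0, hf =>
          rw [opD_zero_on_P0 t N f hf, map_zero]
          exact Submodule.zero_mem _
        | (k + 1), hf =>
          exact opM_maps N k _ (opD_maps t N k f hf)
      · rw [LinearMap.mem_ker, map_smul, opM_opM, smul_zero]
    rw [hdecomp]
    exact Submodule.add_mem _ (Submodule.mem_sup_left h1) (Submodule.mem_sup_right h2)
  · rw [eq_bot_iff]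
    rintro f hf
    obtain ⟨⟨-, hfD⟩, -, hfM⟩ := Submodule.mem_inf.1 hf |>.imp
      Submodule.mem_inf.1 Submodule.mem_inf.1
    rw [Submodule.mem_bot]
    exact hzero f (LinearMap.mem_ker.1 hfD) (LinearMap.mem_ker.1 hfM)
  · apply le_antisymm
    · rintro x ⟨f, hf, rfl⟩
      obtain ⟨hfP, hfD⟩ := Submodule.mem_inf.1 hf
      exact Submodule.mem_inf.2 ⟨opM_maps N m f hfP,
        LinearMap.mem_ker.2 (opM_opM N f)⟩
    · rintro g hg
      obtain ⟨hgP, hgM⟩ := Submodule.mem_inf.1 hg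
      refine ⟨c⁻¹ • opD t N g, Submodule.mem_inf.2 ⟨Submodule.smul_mem _ _
        (opD_maps t N m g hgP), ?_⟩, ?_⟩
      · rw [LinearMap.mem_ker, map_smul, opD_opD, smul_zero]
      · have h := opDM t N g
        rw [LinearMap.mem_ker.1 hgM, map_zero, zero_add] at h
        rw [map_smul, h, smul_smul, inv_mul_cancel₀ hgen, one_smul]
  · rintro f hf hMf
    obtain ⟨-, hfD⟩ := Submodule.mem_inf.1 hf
    exact hzero f (LinearMap.mem_ker.1 hfD) hMf
  · apply le_antisymm
    · rintro x ⟨f, hf, rfl⟩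
      obtain ⟨hfP, hfM⟩ := Submodule.mem_inf.1 hf
      exact Submodule.mem_inf.2 ⟨opD_maps t N m f hfP,
        LinearMap.mem_ker.2 (opD_opD t N f)⟩
    · rintro g hg
      obtain ⟨hgP, hgD⟩ := Submodule.mem_inf.1 hg
      refine ⟨c⁻¹ • opM K N g, Submodule.mem_inf.2 ⟨Submodule.smul_mem _ _
        (opM_maps N m g hgP), ?_⟩, ?_⟩
      · rw [LinearMap.mem_ker, map_smul, opM_opM, smul_zero]
      · have h := opDM t N g
        rw [LinearMap.mem_ker.1 hgD, map_zero, add_zero] at h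
        rw [map_smul, h, smul_smul, inv_mul_cancel₀ hgen, one_smul]
  · rintro f hf hDf
    obtain ⟨-, hfM⟩ := Submodule.mem_inf.1 hf
    exact hzero f hDf (LinearMap.mem_ker.1 hfM)
end
end
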